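/- arXiv:1202.0018 — 2 statements merged into one kernel-verified Lean document; each statement's English description precedes it below -/
import Mathlib

section
/- Semantic correctness of the updatability predicate U_ut^1: for any node n, n satisfies U_ut^1 := ↑*::*[φ_ann][1][φ_valid] if and only if the nearest ancestor-or-self node of n carrying an annotation of type ut exists and that annotation is valid at it, where φ_ann holds at a node iff its label carries an annotation of type ut, the position predicate [1] selects the first element of the ancestor-or-self sequence ordered from n upward, and φ_valid holds at a node iff the annotation on its label is valid there. -/
/-- Values of update/access annotations: `Y`, `N`, `[Q]`, `N_h`, `[Q]_h`,
where qualifiers are abstract node predicates. -/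
inductive AnnValue (Node : Type) where
  | Y : AnnValue Node
  | N : AnnValue Node
  | Q : (Node → Prop) → AnnValue Node
  | Nh : AnnValue Node
  | Qh : (Node → Prop) → AnnValue Node

/-- An annotation value is valid at a node. -/
def AnnValue.validAt {Node : Type} : AnnValue Node → Node → Prop
  | .Y, _ => True
  | .N, _ => False
  | .Q q, n => q n
  | .Nh, _ => False
  | .Qh q, n => q n

/-- The value is a downward-closed annotation that is invalid at the node carrying it. -/
def AnnValue.invalidDC {Node : Type} : AnnValue Node → Node → Prop
  | .Nh, _ => True
  | .Qh q, n => ¬ q n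
  | _, _ => False

/-- A finite labeled rooted tree: nodes, labels, a parent function (none at the root),
and the (finite) ancestor-or-self list of each node, ordered from the node up to the root. -/
structure LTree (σ : Type) where
  Node : Type
  label : Node → σ
  parent : Node → Option Node
  ancSelf : Node → List Node
  ancSelf_eq : ∀ n, ancSelf n =
      n :: (match parent n with | none => [] | some p => ancSelf p)

namespace LTree

variable {σ UT : Type}

/-- Does the label of `m` carry an annotation of type `ut`? -/
def hasAnnB (T : LTree σ) (ann : σ → UT → Option (AnnValue T.Node))
    (ut : UT) (m : T.Node) : Bool := (ann (T.label m) ut).isSome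

/-- The annotation of type `ut` on the label of `m` exists and is valid at `m`. -/
def annValid (T : LTree σ) (ann : σ → UT → Option (AnnValue T.Node))
    (ut : UT) (m : T.Node) : Prop :=
  ∃ v, ann (T.label m) ut = some v ∧ v.validAt m

/-- Node `a` carries an invalid downward-closed annotation of type `ut`. -/
def annInvalidDC (T : LTree σ) (ann : σ → UT → Option (AnnValue T.Node))
    (ut : UT) (a : T.Node) : Prop :=
  ∃ v, ann (T.label a) ut = some v ∧ v.invalidDC a

/-- The nearest ancestor-or-self of `n` carrying an annotation of type `ut`. -/
def nearestAnn (T : LTree σ) (ann : σ → UT → Option (AnnValue T.Node))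
    (ut : UT) (n : T.Node) : Option T.Node :=
  (T.ancSelf n).find? (T.hasAnnB ann ut)

/-- Strict ancestors of `n`, ordered nearest first. -/
def strictAnc (T : LTree σ) (n : T.Node) : List T.Node := (T.ancSelf n).tail

/-- Definition 3: `n` is updatable w.r.t. `ut`: (i) the nearest ancestor-or-self
carrying an annotation of type `ut` exists and that annotation is valid at it, and
(ii) no strict ancestor of `n` carries an invalid downward-closed annotation of type `ut`. -/
def updatable (T : LTree σ) (ann : σ → UT → Option (AnnValue T.Node))
    (ut : UT) (n : T.Node) : Prop :=
  (∃ m, T.nearestAnn ann ut n = some m ∧ T.annValid ann ut m) ∧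
  (∀ a ∈ T.strictAnc n, ¬ T.annInvalidDC ann ut a)

/-- Updates of type `ut` are explicitly forbidden at `n` (conditions (a∨b) or (c)). -/
def forbidden (T : LTree σ) (ann : σ → UT → Option (AnnValue T.Node))
    (ut : UT) (n : T.Node) : Prop :=
  (∃ m, T.nearestAnn ann ut n = some m ∧ ¬ T.annValid ann ut m) ∨
  (∃ a ∈ T.strictAnc n, T.annInvalidDC ann ut a)

end LTree

namespace LTree

variable {σ UT : Type}

theorem not_hasAnnB_iff (T : LTree σ) (ann : σ → UT → Option (AnnValue T.Node)) (ut : UT)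
    (x : T.Node) : (!T.hasAnnB ann ut x) = true ↔ ann (T.label x) ut = none := by
  simp [hasAnnB]

end LTree

/-- semantic correctness of `U_ut^1`: `n` satisfies
`↑*::*[φ_ann][1][φ_valid]` iff the nearest ancestor-or-self of `n` carrying an
annotation of type `ut` exists and that annotation is valid at it. -/
theorem stmt9 (σ UT : Type) (T : LTree σ)
    (ann : σ → UT → Option (AnnValue T.Node)) (ut : UT) (n : T.Node) :
    (∃ m, ((T.ancSelf n).filter (T.hasAnnB ann ut)).head? = some m ∧
        T.annValid ann ut m) ↔
    (∃ (l₁ : List T.Node) (m : T.Node) (l₂ : List T.Node),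
        T.ancSelf n = l₁ ++ m :: l₂ ∧
        (∀ x ∈ l₁, ann (T.label x) ut = none) ∧
        (ann (T.label m) ut).isSome ∧
        T.annValid ann ut m) := by
  simp only [List.head?_filter, List.find?_eq_some_iff_append, LTree.not_hasAnnB_iff]
  constructor
  · rintro ⟨m, ⟨hm, l₁, l₂, hsplit, hnone⟩, hvalid⟩
    exact ⟨l₁, m, l₂, hsplit, hnone, hm, hvalid⟩
  · rintro ⟨l₁, m, l₂, hsplit, hnone, hm, hvalid⟩
    exact ⟨m, ⟨hm, l₁, l₂, hsplit, hnone⟩, hvalid⟩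
end

section
/- Semantic correctness of the updatability predicate U_ut^2: for any node n, n satisfies U_ut^2 := ⋀_{ann(A,ut)=N_h} not(↑+::A) ∧ ⋀_{ann(A,ut)=[Q]_h} not(↑+::A[not Q]) if and only if no strict ancestor of n carries an invalid downward-closed annotation of type ut. -/
theorem AnnValue.invalidDC_iff {Node : Type} {v : AnnValue Node} {n : Node} :
    v.invalidDC n ↔ v = .Nh ∨ ∃ q, v = .Qh q ∧ ¬ q n := by
  cases v <;> simp [AnnValue.invalidDC]

namespace LTree

variable {σ UT : Type}

theorem not_annInvalidDC_iff (T : LTree σ) (ann : σ → UT → Option (AnnValue T.Node))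
    (ut : UT) (a : T.Node) :
    ¬ T.annInvalidDC ann ut a ↔
      ann (T.label a) ut ≠ some .Nh ∧ ∀ q, ann (T.label a) ut = some (.Qh q) → q a := by
  simp only [annInvalidDC, AnnValue.invalidDC_iff]
  grind

end LTree

/-- semantic correctness of `U_ut^2`: the conjunction of negated
ancestor tests holds at `n` iff no strict ancestor of `n` carries an invalid
downward-closed annotation of type `ut`. -/
theorem stmt10 (σ UT : Type) (T : LTree σ)
    (ann : σ → UT → Option (AnnValue T.Node)) (ut : UT) (n : T.Node) :
    ((∀ A : σ, ann A ut = some AnnValue.Nh →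
        ∀ a ∈ T.strictAnc n, T.label a ≠ A) ∧
     (∀ (A : σ) (q : T.Node → Prop), ann A ut = some (AnnValue.Qh q) →
        ∀ a ∈ T.strictAnc n, T.label a = A → q a)) ↔
    (∀ a ∈ T.strictAnc n, ¬ T.annInvalidDC ann ut a) := by
  simp only [T.not_annInvalidDC_iff, ← forall_and]
  grind
end
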